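/- Let 𝔹 ⊆ Bor(C) be a balanced Boolean algebra written as an increasing union of finite subalgebras 𝔹_n, let (m_n) be a strictly increasing sequence of naturals, and let {G_n : n ∈ ℕ} ⊆ 𝔹 be an antichain such that for all k ∈ ℕ and all n ≤ k, the family ℱ(𝔹_n, ⋃_{i≤k} G_i) is (m_n, 2^{-n})-balanced. Then with G = ⋃_{n∈ℕ} G_n, the Boolean algebra generated by 𝔹 ∪ {G} is balanced. -/

import Mathlib

open MeasureTheory Set Filter Topology
open scoped ENNReal

noncomputable section

/-- The Cantor set `{-1,1}^ℕ`, coded with `Bool` (`true ↔ 1`, `false ↔ -1`). -/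
abbrev Cantor : Type := ℕ → Bool

/-- `δ_n(x) = x_n ∈ {-1,1}`. -/
def delta (n : ℕ) (x : Cantor) : ℝ := if x n then 1 else -1

/-- The cylinder `⟨s⟩ = {x : x↾m = s}`. -/
def cyl {m : ℕ} (s : Fin m → Bool) : Set Cantor := {x | ∀ i : Fin m, x i.1 = s i}

/-- `φ_n(A) = ∫_A δ_n dμ`. -/
def phi (μ : Measure Cantor) (n : ℕ) (A : Set Cantor) : ℝ := ∫ x in A, delta n x ∂μ

/-- `μ` is the Haar (fair-coin product) measure on the Cantor set:
every cylinder of length `m` has measure `2^{-m}`. -/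
def IsHaar (μ : Measure Cantor) : Prop :=
  ∀ (m : ℕ) (s : Fin m → Bool), μ (cyl s) = (2 : ℝ≥0∞)⁻¹ ^ m

/-- `A` is `(t,ε)`-semibalanced: `|φ_r(A)| < ε/r` for all `r > t`. -/
def Semibalanced (μ : Measure Cantor) (t : ℕ) (ε : ℝ) (A : Set Cantor) : Prop :=
  ∀ r : ℕ, t < r → |phi μ r A| < ε / (r : ℝ)

/-- `A` is `(m,ε)`-balanced. -/
def BalancedAt (μ : Measure Cantor) (m : ℕ) (ε : ℝ) (A : Set Cantor) : Prop :=
  ∀ s : Fin m → Bool,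
    ((μ (A ∩ cyl s)).toReal / (μ (cyl s)).toReal < ε / (m : ℝ) ∨
      (μ (cyl s \ A)).toReal / (μ (cyl s)).toReal < ε / (m : ℝ)) ∧
    ∀ r : ℕ, m < r → |phi μ r (A ∩ cyl s)| / (μ (cyl s)).toReal < ε / (r : ℝ)

/-- `A` is `(m,t,ε)`-balanced. -/
def BalancedAtT (μ : Measure Cantor) (m t : ℕ) (ε : ℝ) (A : Set Cantor) : Prop :=
  ∀ s : Fin m → Bool,
    ((μ (A ∩ cyl s)).toReal / (μ (cyl s)).toReal < ε / (m : ℝ) ∨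
      (μ (cyl s \ A)).toReal / (μ (cyl s)).toReal < ε / (m : ℝ)) ∧
    ∀ r : ℕ, m < r → r ≤ t → |phi μ r (A ∩ cyl s)| / (μ (cyl s)).toReal < ε / (r : ℝ)

/-- The Boolean algebra of subsets of the Cantor set generated by a family `S`. -/
def genAlgebra (S : Set (Set Cantor)) : Set (Set Cantor) :=
  ⋂₀ {T : Set (Set Cantor) | S ⊆ T ∧ Set.univ ∈ T ∧ (∀ A ∈ T, Aᶜ ∈ T) ∧
      ∀ A ∈ T, ∀ B ∈ T, A ∪ B ∈ T}

/-- A family of Borel sets is balanced: every finite subfamily is `(m,ε)`-balanced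
for some `m`, for each `ε > 0`. -/
def BalancedFamily (μ : Measure Cantor) (B : Set (Set Cantor)) : Prop :=
  ∀ 𝒜 : Set (Set Cantor), 𝒜 ⊆ B → 𝒜.Finite → ∀ ε : ℝ, 0 < ε →
    ∃ m : ℕ, ∀ A ∈ 𝒜, BalancedAt μ m ε A

/-!
Every member of the algebra generated by `𝔹 ∪ {G}` has the form `X = (A₁ ∩ G) ∪ (A₂ \ G)` with
`A₁, A₂` in a common `𝔹_N`, and `N` may be taken as large as we like. For `k ≥ N` the sets
`X_k = (A₁ ∩ G_{≤k}) ∪ (A₂ \ G_{≤k})` are disjoint unions of two `(m_N, 2⁻ᴺ)`-balanced sets,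
hence `(m_N, 2 · 2⁻ᴺ)`-balanced, while `μ (X_k ∆ X) ≤ μ (G \ G_{≤k}) → 0`. Balancedness survives
this limit at the cost of an arbitrarily small increase of the constant, so `X` is
`(m_N, ε)`-balanced as soon as `2 · 2⁻ᴺ < ε`.
-/

open scoped symmDiff

lemma tendsto_of_abs_sub_le {ι : Type*} {l : Filter ι} {u d : ι → ℝ} {a : ℝ}
    (hd : Tendsto d l (𝓝 0)) (h : ∀ i, |u i - a| ≤ d i) : Tendsto u l (𝓝 a) :=
  tendsto_iff_norm_sub_tendsto_zero.2 (squeeze_zero (fun _ => norm_nonneg _) h hd)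

lemma measurable_delta (n : ℕ) : Measurable (delta n) :=
  Measurable.ite (measurableSet_eq_fun (measurable_pi_apply n) measurable_const)
    measurable_const measurable_const

lemma norm_delta_le (n : ℕ) (x : Cantor) : ‖delta n x‖ ≤ 1 := by
  unfold delta; split <;> norm_num

lemma measurableSet_cyl {m : ℕ} (s : Fin m → Bool) : MeasurableSet (cyl s) := by
  have : cyl s = ⋂ i : Fin m, (fun x : Cantor => x i.1) ⁻¹' {s i} := by
    ext x; simp [cyl]
  rw [this]
  exact MeasurableSet.iInter fun i => measurable_pi_apply i.1 (measurableSet_singleton _)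

section Phi

variable {μ : Measure Cantor} [IsFiniteMeasure μ] (r : ℕ)

lemma integrable_delta : Integrable (delta r) μ :=
  (integrable_const 1).mono' (measurable_delta r).aestronglyMeasurable
    (ae_of_all _ (norm_delta_le r))

lemma abs_phi_le (U : Set Cantor) : |phi μ r U| ≤ μ.real U := by
  rw [phi, ← Real.norm_eq_abs]
  simpa using norm_setIntegral_le_of_norm_le_const (measure_lt_top μ U)
    (fun x _ => norm_delta_le r x)

lemma phi_union {U V : Set Cantor} (h : Disjoint U V) (hV : MeasurableSet V) :
    phi μ r (U ∪ V) = phi μ r U + phi μ r V :=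
  setIntegral_union h hV (integrable_delta r).integrableOn (integrable_delta r).integrableOn

lemma abs_phi_sub_phi_le {U V : Set Cantor} (hU : MeasurableSet U) (hV : MeasurableSet V) :
    |phi μ r U - phi μ r V| ≤ μ.real (U ∆ V) := by
  have eU : phi μ r U = phi μ r (U ∩ V) + phi μ r (U \ V) := by
    rw [← phi_union r (disjoint_sdiff_self_right.mono_left inter_subset_right) (hU.diff hV),
      inter_union_sdiff]
  have eV : phi μ r V = phi μ r (U ∩ V) + phi μ r (V \ U) := by
    rw [← phi_union r (disjoint_sdiff_self_right.mono_left inter_subset_left) (hV.diff hU),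
      inter_comm, inter_union_sdiff]
  calc |phi μ r U - phi μ r V|
      = |phi μ r (U \ V) - phi μ r (V \ U)| := by rw [eU, eV, add_sub_add_left_eq_sub]
    _ ≤ μ.real (U \ V) + μ.real (V \ U) :=
      (abs_sub _ _).trans (add_le_add (abs_phi_le r _) (abs_phi_le r _))
    _ = μ.real (U ∆ V) := (measureReal_symmDiff_eq hU hV).symm

end Phi

section Balanced

variable {μ : Measure Cantor} {m : ℕ} {ε ε' : ℝ}

lemma BalancedAt.div_pos {A : Set Cantor} (h : BalancedAt μ m ε A) : 0 < ε / m := by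
  obtain ⟨h | h, -⟩ := h (fun _ => true) <;>
    exact (div_nonneg ENNReal.toReal_nonneg ENNReal.toReal_nonneg).trans_lt h

variable [IsFiniteMeasure μ]

lemma BalancedAt.union {U V : Set Cantor} (hUV : Disjoint U V) (hVm : MeasurableSet V)
    (hU : BalancedAt μ m ε U) (hV : BalancedAt μ m ε' V) : BalancedAt μ m (ε + ε') (U ∪ V) := by
  intro s
  obtain ⟨hUs, hUφ⟩ := hU s
  obtain ⟨hVs, hVφ⟩ := hV s
  have hUVs : (U ∪ V) ∩ cyl s = U ∩ cyl s ∪ V ∩ cyl s := union_inter_distrib_right _ _ _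
  have hc : 0 ≤ (μ (cyl s)).toReal := ENNReal.toReal_nonneg
  have hε := hU.div_pos
  have hε' := hV.div_pos
  constructor
  · rcases hUs with hUs | hUs
    · rcases hVs with hVs | hVs
      · left
        calc (μ ((U ∪ V) ∩ cyl s)).toReal / (μ (cyl s)).toReal
            ≤ ((μ (U ∩ cyl s)).toReal + (μ (V ∩ cyl s)).toReal) / (μ (cyl s)).toReal :=
              div_le_div_of_nonneg_right (hUVs ▸ measureReal_union_le _ _) hc
          _ < ε / m + ε' / m := by rw [add_div]; exact add_lt_add hUs hVs
          _ = (ε + ε') / m := (add_div _ _ _).symm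
      · right
        calc (μ (cyl s \ (U ∪ V))).toReal / (μ (cyl s)).toReal
            ≤ (μ (cyl s \ V)).toReal / (μ (cyl s)).toReal :=
              div_le_div_of_nonneg_right
                (measureReal_mono (sdiff_subset_sdiff_right subset_union_right)) hc
          _ < (ε + ε') / m := by rw [add_div]; linarith
    · right
      calc (μ (cyl s \ (U ∪ V))).toReal / (μ (cyl s)).toReal
          ≤ (μ (cyl s \ U)).toReal / (μ (cyl s)).toReal :=
            div_le_div_of_nonneg_right
              (measureReal_mono (sdiff_subset_sdiff_right subset_union_left)) hc
        _ < (ε + ε') / m := by rw [add_div]; linarith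
  · intro r hr
    have hdisj : Disjoint (U ∩ cyl s) (V ∩ cyl s) :=
      hUV.mono inter_subset_left inter_subset_left
    calc |phi μ r ((U ∪ V) ∩ cyl s)| / (μ (cyl s)).toReal
        ≤ (|phi μ r (U ∩ cyl s)| + |phi μ r (V ∩ cyl s)|) / (μ (cyl s)).toReal := by
          rw [hUVs, phi_union r hdisj (hVm.inter (measurableSet_cyl s))]
          exact div_le_div_of_nonneg_right (abs_add_le _ _) hc
      _ < ε / r + ε' / r := by rw [add_div]; exact add_lt_add (hUφ r hr) (hVφ r hr)
      _ = (ε + ε') / r := (add_div _ _ _).symm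

/-- All quantities entering `BalancedAt` are `1`-Lipschitz for the pseudometric `μ (U ∆ V)`;
the strict inequalities may be lost in the limit, which the margin `δ < ε` absorbs. -/
lemma BalancedAt.of_tendsto {ι : Type*} {l : Filter ι} [l.NeBot] {δ : ℝ} {X : ι → Set Cantor}
    {A : Set Cantor} (hX : ∀ i, MeasurableSet (X i)) (hA : MeasurableSet A)
    (hlim : Tendsto (fun i => μ (X i ∆ A)) l (𝓝 0))
    (hbal : ∀ᶠ i in l, BalancedAt μ m δ (X i)) (hδε : δ < ε) : BalancedAt μ m ε A := by
  have hd : Tendsto (fun i => μ.real (X i ∆ A)) l (𝓝 0) := by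
    have := (ENNReal.tendsto_toReal ENNReal.zero_ne_top).comp hlim
    rwa [ENNReal.toReal_zero] at this
  have hlt : ∀ {x : ℝ} {k : ℕ}, m ≤ k → x ≤ δ / k → x < ε / k := by
    intro x k hk hx
    have hm : (0 : ℝ) < k := by
      obtain ⟨i, hi⟩ := hbal.exists
      have := hi.div_pos
      exact Nat.cast_pos.2 ((Nat.pos_of_ne_zero fun h => by simp [h] at this).trans_le hk)
    exact hx.trans_lt (div_lt_div_of_pos_right hδε hm)
  intro s
  have hcyl := measurableSet_cyl s
  have hmeasure : ∀ {U : ι → Set Cantor} {V : Set Cantor}, (∀ i, MeasurableSet (U i)) →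
      MeasurableSet V → (∀ i, U i ∆ V ⊆ X i ∆ A) →
      Tendsto (fun i => μ.real (U i) / μ.real (cyl s)) l (𝓝 (μ.real V / μ.real (cyl s))) :=
    fun hU hV hUV => (tendsto_of_abs_sub_le hd fun i =>
      (abs_measureReal_sub_le_measureReal_symmDiff (hU i).nullMeasurableSet
        hV.nullMeasurableSet).trans (measureReal_mono (hUV i))).div_const _
  constructor
  · have hin := hmeasure (fun i => (hX i).inter hcyl) (hA.inter hcyl) fun i =>
      (inter_symmDiff_distrib_right _ _ _).symm.subset.trans inter_subset_left
    have hout := hmeasure (fun i => hcyl.diff (hX i)) (hcyl.diff hA) fun i x => by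
      simp only [mem_symmDiff, Set.mem_sdiff]; tauto
    have hclosed : IsClosed {p : ℝ × ℝ | p.1 ≤ δ / m ∨ p.2 ≤ δ / m} :=
      (isClosed_le continuous_fst continuous_const).union
        (isClosed_le continuous_snd continuous_const)
    exact (hclosed.mem_of_tendsto (hin.prodMk_nhds hout) (hbal.mono fun i hi =>
      (hi s).1.imp le_of_lt le_of_lt)).imp (hlt le_rfl) (hlt le_rfl)
  · intro r hr
    have hphi : Tendsto (fun i => |phi μ r (X i ∩ cyl s)| / μ.real (cyl s)) l
        (𝓝 (|phi μ r (A ∩ cyl s)| / μ.real (cyl s))) :=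
      ((tendsto_of_abs_sub_le hd fun i =>
        (abs_phi_sub_phi_le r ((hX i).inter hcyl) (hA.inter hcyl)).trans
          (measureReal_mono ((inter_symmDiff_distrib_right _ _ _).symm.subset.trans
            inter_subset_left))).abs).div_const _
    exact hlt hr.le (le_of_tendsto hphi (hbal.mono fun i hi => ((hi s).2 r hr).le))

end Balanced

lemma inter_union_sdiff_symmDiff_subset {α : Type*} {A₁ A₂ H G : Set α} (hHG : H ⊆ G) :
    (A₁ ∩ H ∪ A₂ \ H) ∆ (A₁ ∩ G ∪ A₂ \ G) ⊆ G \ H := fun x => by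
  have := @hHG x
  simp only [mem_symmDiff, mem_union, mem_inter_iff, Set.mem_sdiff]
  tauto

lemma tendsto_measure_iUnion_sdiff_biUnion_range {α : Type*} [MeasurableSpace α]
    (μ : Measure α) [IsFiniteMeasure μ] {G : ℕ → Set α} (hG : ∀ n, MeasurableSet (G n)) :
    Tendsto (fun k => μ ((⋃ n, G n) \ ⋃ i ∈ Finset.range (k + 1), G i)) atTop (𝓝 0) := by
  have hanti : Antitone fun k => (⋃ n, G n) \ ⋃ i ∈ Finset.range (k + 1), G i :=
    fun k l hkl => sdiff_subset_sdiff_right <| biUnion_subset_biUnion_left <| by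
      simpa using hkl
  have hempty : ⋂ k, ((⋃ n, G n) \ ⋃ i ∈ Finset.range (k + 1), G i) = ∅ := by
    refine eq_empty_of_forall_notMem fun x hx => ?_
    obtain ⟨i, hi⟩ := mem_iUnion.1 (mem_iInter.1 hx 0).1
    exact (mem_iInter.1 hx i).2 (mem_biUnion (Finset.self_mem_range_succ i) hi)
  have := tendsto_measure_iInter_atTop
    (fun k => ((MeasurableSet.iUnion hG).diff
      (Finset.measurableSet_biUnion _ fun i _ => hG i)).nullMeasurableSet) hanti
    ⟨0, measure_ne_top μ _⟩
  rwa [hempty, measure_empty] at this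

lemma eventually_exists_eq_inter_union_sdiff_of_mem_genAlgebra {Bn : ℕ → Set (Set Cantor)}
    (hBn_mono : Monotone Bn)
    (hBn_alg : ∀ n, Set.univ ∈ Bn n ∧ (∀ A ∈ Bn n, Aᶜ ∈ Bn n) ∧
      ∀ A ∈ Bn n, ∀ A' ∈ Bn n, A ∪ A' ∈ Bn n)
    (G : Set Cantor) {X : Set Cantor} (hX : X ∈ genAlgebra ((⋃ n, Bn n) ∪ {G})) :
    ∀ᶠ n in atTop, ∃ A₁ ∈ Bn n, ∃ A₂ ∈ Bn n, X = A₁ ∩ G ∪ A₂ \ G := by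
  have huniv : ∀ n, univ ∈ Bn n := fun n => (hBn_alg n).1
  have hcompl : ∀ n, ∀ A ∈ Bn n, Aᶜ ∈ Bn n := fun n => (hBn_alg n).2.1
  have hunion : ∀ n, ∀ A ∈ Bn n, ∀ A' ∈ Bn n, A ∪ A' ∈ Bn n := fun n => (hBn_alg n).2.2
  refine hX {X | ∀ᶠ n in atTop, ∃ A₁ ∈ Bn n, ∃ A₂ ∈ Bn n, X = A₁ ∩ G ∪ A₂ \ G}
    ⟨?_, .of_forall fun n => ⟨univ, huniv n, univ, huniv n, (inter_union_sdiff _ _).symm⟩,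
      ?_, ?_⟩
  · rintro A (hA | rfl)
    · obtain ⟨n, hn⟩ := mem_iUnion.1 hA
      exact (eventually_ge_atTop n).mono fun k hk =>
        ⟨A, hBn_mono hk hn, A, hBn_mono hk hn, (inter_union_sdiff _ _).symm⟩
    · exact .of_forall fun n =>
        ⟨univ, huniv n, univᶜ, hcompl n _ (huniv n), by simp⟩
  · intro A hA
    refine hA.mono fun n ⟨A₁, h₁, A₂, h₂, hA⟩ => ⟨A₁ᶜ, hcompl n _ h₁, A₂ᶜ, hcompl n _ h₂, ?_⟩
    ext x; by_cases h : x ∈ G <;> simp [hA, h]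
  · intro A hA A' hA'
    refine (hA.and hA').mono fun n ⟨⟨A₁, h₁, A₂, h₂, hA⟩, ⟨A₁', h₁', A₂', h₂', hA'⟩⟩ =>
      ⟨A₁ ∪ A₁', hunion n _ h₁ _ h₁', A₂ ∪ A₂', hunion n _ h₂ _ h₂', ?_⟩
    ext x; by_cases h : x ∈ G <;> simp [hA, hA', h]

theorem stmt15_general (μ : Measure Cantor) [IsProbabilityMeasure μ]
    (B : Set (Set Cantor)) (Bn : ℕ → Set (Set Cantor))
    (hBn_mono : Monotone Bn)
    (hBn_alg : ∀ n, Set.univ ∈ Bn n ∧ (∀ A ∈ Bn n, Aᶜ ∈ Bn n) ∧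
      ∀ A ∈ Bn n, ∀ A' ∈ Bn n, A ∪ A' ∈ Bn n)
    (hBunion : B = ⋃ n, Bn n)
    (hmeas : ∀ A ∈ B, MeasurableSet A)
    (m : ℕ → ℕ)
    (G : ℕ → Set Cantor) (hG : ∀ n, G n ∈ B)
    (hkey : ∀ k : ℕ, ∀ n : ℕ, n ≤ k → ∀ A ∈ Bn n,
      BalancedAt μ (m n) ((2 : ℝ)⁻¹ ^ n) (A ∩ ⋃ i ∈ Finset.range (k + 1), G i) ∧
      BalancedAt μ (m n) ((2 : ℝ)⁻¹ ^ n) (A \ ⋃ i ∈ Finset.range (k + 1), G i)) :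
    BalancedFamily μ (genAlgebra (B ∪ {⋃ n, G n})) := by
  subst hBunion
  intro 𝒜 h𝒜 h𝒜_fin ε hε
  have hpow := tendsto_pow_atTop_nhds_zero_of_lt_one (by norm_num : (0 : ℝ) ≤ 2⁻¹) (by norm_num)
  obtain ⟨N, hNε, hN𝒜⟩ : ∃ N, (2 : ℝ)⁻¹ ^ N + (2 : ℝ)⁻¹ ^ N < ε ∧
      ∀ X ∈ 𝒜, ∃ A₁ ∈ Bn N, ∃ A₂ ∈ Bn N, X = A₁ ∩ (⋃ n, G n) ∪ A₂ \ ⋃ n, G n :=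
    (((hpow.add hpow).eventually_lt_const (by rwa [add_zero])).and
      ((eventually_all_finite h𝒜_fin).2 fun X hX =>
        eventually_exists_eq_inter_union_sdiff_of_mem_genAlgebra hBn_mono hBn_alg _
          (h𝒜 hX))).exists
  refine ⟨m N, fun X hX => ?_⟩
  obtain ⟨A₁, hA₁, A₂, hA₂, rfl⟩ := hN𝒜 X hX
  have hmeasN : ∀ A ∈ Bn N, MeasurableSet A := fun A hA => hmeas A (mem_iUnion_of_mem N hA)
  have hGm : ∀ n, MeasurableSet (G n) := fun n => hmeas _ (hG n)
  have hGkm : ∀ k, MeasurableSet (⋃ i ∈ Finset.range (k + 1), G i) :=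
    fun k => Finset.measurableSet_biUnion _ fun i _ => hGm i
  refine BalancedAt.of_tendsto
    (fun k => ((hmeasN A₁ hA₁).inter (hGkm k)).union ((hmeasN A₂ hA₂).diff (hGkm k)))
    (((hmeasN A₁ hA₁).inter (.iUnion hGm)).union ((hmeasN A₂ hA₂).diff (.iUnion hGm)))
    (tendsto_of_tendsto_of_tendsto_of_le_of_le tendsto_const_nhds
      (tendsto_measure_iUnion_sdiff_biUnion_range μ hGm) (fun _ => zero_le)
      fun k => measure_mono (inter_union_sdiff_symmDiff_subset
        (iUnion₂_subset fun i _ => subset_iUnion G i)))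
    ((eventually_ge_atTop N).mono fun k hk =>
      BalancedAt.union (disjoint_sdiff_right.mono_left inter_subset_right)
        ((hmeasN A₂ hA₂).diff (hGkm k)) (hkey k N hk A₁ hA₁).1 (hkey k N hk A₂ hA₂).2)
    hNε

/-- Extending a balanced algebra `𝔹 = ⋃ₙ 𝔹ₙ` by `G = ⋃ₙ Gₙ`, where `(Gₙ)` is an
antichain in `𝔹` such that each family `ℱ(𝔹ₙ, ⋃_{i≤k} G_i)` is `(mₙ, 2⁻ⁿ)`-balanced,
yields a balanced algebra. -/
theorem stmt15 (μ : Measure Cantor) [IsProbabilityMeasure μ] (hμ : IsHaar μ)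
    (B : Set (Set Cantor)) (Bn : ℕ → Set (Set Cantor))
    (hBn_fin : ∀ n, (Bn n).Finite) (hBn_mono : Monotone Bn)
    (hBn_alg : ∀ n, Set.univ ∈ Bn n ∧ (∀ A ∈ Bn n, Aᶜ ∈ Bn n) ∧
      ∀ A ∈ Bn n, ∀ A' ∈ Bn n, A ∪ A' ∈ Bn n)
    (hBunion : B = ⋃ n, Bn n)
    (hmeas : ∀ A ∈ B, MeasurableSet A)
    (hbalB : BalancedFamily μ B)
    (m : ℕ → ℕ) (hm : StrictMono m)
    (G : ℕ → Set Cantor) (hG : ∀ n, G n ∈ B)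
    (hGd : Pairwise (Function.onFun Disjoint G))
    (hkey : ∀ k : ℕ, ∀ n : ℕ, n ≤ k → ∀ A ∈ Bn n,
      BalancedAt μ (m n) ((2 : ℝ)⁻¹ ^ n) (A ∩ ⋃ i ∈ Finset.range (k + 1), G i) ∧
      BalancedAt μ (m n) ((2 : ℝ)⁻¹ ^ n) (A \ ⋃ i ∈ Finset.range (k + 1), G i)) :
    BalancedFamily μ (genAlgebra (B ∪ {⋃ n, G n})) :=
  stmt15_general μ B Bn hBn_mono hBn_alg hBunion hmeas m G hG hkey
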